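/- Let π be an s/u-bijective pair for a Smale space (X, φ). Then there exists N₀ ≥ 0 such that for all L, M ≥ 0 with L > N₀ or M > N₀, every element (y_0, …, y_L, z_0, …, z_M) of Σ_{L,M}(π) has a repeated entry (two equal y-coordinates if L > N₀, or two equal z-coordinates if M > N₀). -/

import Mathlib

open Filter Topology Set

/-- A Smale space structure on a compact metric space. -/
structure SmaleSpace (X : Type) [MetricSpace X] : Type where
  compact : CompactSpace X
  phi : X ≃ₜ X
  eps : ℝ
  eps_pos : 0 < eps
  lam : ℝ
  lam_pos : 0 < lam
  lam_lt_one : lam < 1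
  bracket : X → X → X
  bracket_cont : ContinuousOn (fun p : X × X => bracket p.1 p.2) {p | dist p.1 p.2 ≤ eps}
  bracket_self : ∀ x, bracket x x = x
  bracket_eq₁ : ∀ x y z, dist x y ≤ eps → dist y z ≤ eps → dist x z ≤ eps →
    bracket x (bracket y z) = bracket x z
  bracket_eq₂ : ∀ x y z, dist x y ≤ eps → dist y z ≤ eps → dist x z ≤ eps →
    bracket (bracket x y) z = bracket x z
  bracket_phi : ∀ x y, dist x y ≤ eps → dist (phi x) (phi y) ≤ eps →
    phi (bracket x y) = bracket (phi x) (phi y)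
  contract_s : ∀ x y z, dist x y ≤ eps → bracket x y = y → dist x z ≤ eps → bracket x z = z →
    dist (phi y) (phi z) ≤ lam * dist y z
  contract_u : ∀ x y z, dist x y ≤ eps → bracket y x = y → dist x z ≤ eps → bracket z x = z →
    dist (phi.symm y) (phi.symm z) ≤ lam * dist y z

namespace SmaleSpace

variable {X : Type} [MetricSpace X]

/-- The local stable set `X^s(x, ε)`. -/
def locStable (S : SmaleSpace X) (x : X) (ε : ℝ) : Set X :=
  {y | dist x y ≤ ε ∧ S.bracket x y = y}

/-- The local unstable set `X^u(x, ε)`. -/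
def locUnstable (S : SmaleSpace X) (x : X) (ε : ℝ) : Set X :=
  {y | dist x y ≤ ε ∧ S.bracket y x = y}

end SmaleSpace

/-- Stable equivalence: the forward orbits are asymptotic. -/
def StableEquiv {X : Type} [MetricSpace X] (φ : X → X) (x y : X) : Prop :=
  Tendsto (fun n : ℕ => dist (φ^[n] x) (φ^[n] y)) atTop (𝓝 0)

/-- Unstable equivalence: the backward orbits are asymptotic. -/
def UnstableEquiv {X : Type} [MetricSpace X] (φ : X ≃ₜ X) (x y : X) : Prop :=
  Tendsto (fun n : ℕ => dist ((φ.symm : X → X)^[n] x) ((φ.symm : X → X)^[n] y)) atTop (𝓝 0)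

/-- A point-free formulation of non-wandering: every point is non-wandering. -/
def NonWandering {X : Type} [TopologicalSpace X] (φ : X → X) : Prop :=
  ∀ x : X, ∀ U ∈ 𝓝 x, ∃ n : ℕ, 1 ≤ n ∧ (φ^[n] '' U ∩ U).Nonempty

/-- A factor map between topological dynamical systems. -/
structure IsFactorMap {Y X : Type} [TopologicalSpace Y] [TopologicalSpace X]
    (ψ : Y ≃ₜ Y) (φ : X ≃ₜ X) (π : Y → X) : Prop where
  continuous : Continuous π
  surjective : Function.Surjective π
  semiconj : ∀ y, π (ψ y) = φ (π y)

/-- An `s`-resolving factor map: injective on stable equivalence classes. -/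
structure IsSResolving {Y X : Type} [MetricSpace Y] [MetricSpace X]
    (ψ : Y ≃ₜ Y) (φ : X ≃ₜ X) (π : Y → X) extends IsFactorMap ψ φ π : Prop where
  inj : ∀ y : Y, Set.InjOn π {y' | StableEquiv (⇑ψ) y y'}

/-- A `u`-resolving factor map: injective on unstable equivalence classes. -/
structure IsUResolving {Y X : Type} [MetricSpace Y] [MetricSpace X]
    (ψ : Y ≃ₜ Y) (φ : X ≃ₜ X) (π : Y → X) extends IsFactorMap ψ φ π : Prop where
  inj : ∀ y : Y, Set.InjOn π {y' | UnstableEquiv ψ y y'}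

/-- An `s`-bijective factor map: bijective from each stable class onto that of the image. -/
structure IsSBij {Y X : Type} [MetricSpace Y] [MetricSpace X]
    (ψ : Y ≃ₜ Y) (φ : X ≃ₜ X) (π : Y → X) extends IsFactorMap ψ φ π : Prop where
  bij : ∀ y : Y, Set.BijOn π {y' | StableEquiv (⇑ψ) y y'} {x | StableEquiv (⇑φ) (π y) x}

/-- A `u`-bijective factor map: bijective from each unstable class onto that of the image. -/
structure IsUBij {Y X : Type} [MetricSpace Y] [MetricSpace X]
    (ψ : Y ≃ₜ Y) (φ : X ≃ₜ X) (π : Y → X) extends IsFactorMap ψ φ π : Prop where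
  bij : ∀ y : Y, Set.BijOn π {y' | UnstableEquiv ψ y y'} {x | UnstableEquiv φ (π y) x}

section Krieger

variable {X : Type} [MetricSpace X]

/-- The collection of compact open subsets of local stable sets. -/
def DSsets (S : SmaleSpace X) : Set (Set X) :=
  {E | IsCompact E ∧ ∃ x ε, 0 < ε ∧ ε ≤ S.eps ∧ E ⊆ S.locStable x ε ∧
    ∃ U : Set X, IsOpen U ∧ E = U ∩ S.locStable x ε}

/-- The collection of compact open subsets of local unstable sets. -/
def DUsets (S : SmaleSpace X) : Set (Set X) :=
  {E | IsCompact E ∧ ∃ x ε, 0 < ε ∧ ε ≤ S.eps ∧ E ⊆ S.locUnstable x ε ∧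
    ∃ U : Set X, IsOpen U ∧ E = U ∩ S.locUnstable x ε}

/-- The elementwise bracket `[E, F]` of two sets. -/
def bracketSet (S : SmaleSpace X) (E F : Set X) : Set X :=
  {z | ∃ e ∈ E, ∃ f ∈ F, z = S.bracket e f}

/-- All brackets of elements of `E` with elements of `F` are defined. -/
def bracketOk (S : SmaleSpace X) (E F : Set X) : Prop :=
  ∀ e ∈ E, ∀ f ∈ F, dist e f ≤ S.eps

/-- The smallest equivalence relation on compact open subsets of local stable sets with
`E ∼ F` when `[E,F] = F` and `[F,E] = E`, and with `E ∼ F` iff `φ(E) ∼ φ(F)` whenever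
all four sets are in `𝒟ˢ`. -/
inductive KriegerS (S : SmaleSpace X) : Set X → Set X → Prop
  | base : ∀ E F, E ∈ DSsets S → F ∈ DSsets S → bracketOk S E F → bracketOk S F E →
      bracketSet S E F = F → bracketSet S F E = E → KriegerS S E F
  | fwd : ∀ E F, E ∈ DSsets S → F ∈ DSsets S →
      (⇑S.phi '' E) ∈ DSsets S → (⇑S.phi '' F) ∈ DSsets S →
      KriegerS S E F → KriegerS S (⇑S.phi '' E) (⇑S.phi '' F)
  | bwd : ∀ E F, E ∈ DSsets S → F ∈ DSsets S →
      (⇑S.phi '' E) ∈ DSsets S → (⇑S.phi '' F) ∈ DSsets S →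
      KriegerS S (⇑S.phi '' E) (⇑S.phi '' F) → KriegerS S E F
  | refl : ∀ E, E ∈ DSsets S → KriegerS S E E
  | symm : ∀ E F, KriegerS S E F → KriegerS S F E
  | trans : ∀ E F G, KriegerS S E F → KriegerS S F G → KriegerS S E G

/-- The analogous equivalence relation for unstable sets. -/
inductive KriegerU (S : SmaleSpace X) : Set X → Set X → Prop
  | base : ∀ E F, E ∈ DUsets S → F ∈ DUsets S → bracketOk S E F → bracketOk S F E →
      bracketSet S E F = F → bracketSet S F E = E → KriegerU S E F
  | fwd : ∀ E F, E ∈ DUsets S → F ∈ DUsets S →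
      (⇑S.phi '' E) ∈ DUsets S → (⇑S.phi '' F) ∈ DUsets S →
      KriegerU S E F → KriegerU S (⇑S.phi '' E) (⇑S.phi '' F)
  | bwd : ∀ E F, E ∈ DUsets S → F ∈ DUsets S →
      (⇑S.phi '' E) ∈ DUsets S → (⇑S.phi '' F) ∈ DUsets S →
      KriegerU S (⇑S.phi '' E) (⇑S.phi '' F) → KriegerU S E F
  | refl : ∀ E, E ∈ DUsets S → KriegerU S E E
  | symm : ∀ E F, KriegerU S E F → KriegerU S F E
  | trans : ∀ E F G, KriegerU S E F → KriegerU S F G → KriegerU S E G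

/-- Relations defining Krieger's (future) dimension group. -/
def DsRels (S : SmaleSpace X) : Set (FreeAbelianGroup {E : Set X // E ∈ DSsets S}) :=
  {a | ∃ E F : {E : Set X // E ∈ DSsets S}, KriegerS S E.1 F.1 ∧
      a = FreeAbelianGroup.of E - FreeAbelianGroup.of F} ∪
  {a | ∃ E F U : {E : Set X // E ∈ DSsets S}, Disjoint E.1 F.1 ∧ U.1 = E.1 ∪ F.1 ∧
      a = FreeAbelianGroup.of U - FreeAbelianGroup.of E - FreeAbelianGroup.of F}

def DuRels (S : SmaleSpace X) : Set (FreeAbelianGroup {E : Set X // E ∈ DUsets S}) :=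
  {a | ∃ E F : {E : Set X // E ∈ DUsets S}, KriegerU S E.1 F.1 ∧
      a = FreeAbelianGroup.of E - FreeAbelianGroup.of F} ∪
  {a | ∃ E F U : {E : Set X // E ∈ DUsets S}, Disjoint E.1 F.1 ∧ U.1 = E.1 ∪ F.1 ∧
      a = FreeAbelianGroup.of U - FreeAbelianGroup.of E - FreeAbelianGroup.of F}

/-- Krieger's dimension group `D^s`. -/
abbrev Ds (S : SmaleSpace X) : Type :=
  FreeAbelianGroup {E : Set X // E ∈ DSsets S} ⧸ AddSubgroup.closure (DsRels S)

/-- Krieger's dimension group `D^u`. -/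
abbrev Du (S : SmaleSpace X) : Type :=
  FreeAbelianGroup {E : Set X // E ∈ DUsets S} ⧸ AddSubgroup.closure (DuRels S)

/-- The class `[E]` in `D^s`. -/
def mkDs (S : SmaleSpace X) (E : {E : Set X // E ∈ DSsets S}) : Ds S :=
  QuotientAddGroup.mk (FreeAbelianGroup.of E)

/-- The class `[E]` in `D^u`. -/
def mkDu (S : SmaleSpace X) (E : {E : Set X // E ∈ DUsets S}) : Du S :=
  QuotientAddGroup.mk (FreeAbelianGroup.of E)

end Krieger

section Induced

variable {Y X : Type} [MetricSpace Y] [MetricSpace X]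

/-- `f` is the covariant map on `D^s` induced by (an `s`-bijective) `π`: it sends `[E]` to `[π(E)]`. -/
def CovSProp (S : SmaleSpace Y) (S' : SmaleSpace X) (π : Y → X) (f : Ds S →+ Ds S') : Prop :=
  ∀ E : {E : Set Y // E ∈ DSsets S}, ∃ h' : π '' E.1 ∈ DSsets S',
    f (mkDs S E) = mkDs S' ⟨π '' E.1, h'⟩

/-- `f` is the covariant map on `D^u` induced by (a `u`-bijective) `π`. -/
def CovUProp (S : SmaleSpace Y) (S' : SmaleSpace X) (π : Y → X) (f : Du S →+ Du S') : Prop :=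
  ∀ E : {E : Set Y // E ∈ DUsets S}, ∃ h' : π '' E.1 ∈ DUsets S',
    f (mkDu S E) = mkDu S' ⟨π '' E.1, h'⟩

/-- `g` is the contravariant map on `D^s` induced by (a `u`-bijective) `π`: it sends `[E']` to
`Σᵢ [Eᵢ]` where `π⁻¹(E')` is written as a finite disjoint union of the `Eᵢ ∈ 𝒟^s`. -/
def ContraSProp (S : SmaleSpace Y) (S' : SmaleSpace X) (π : Y → X) (g : Ds S' →+ Ds S) : Prop :=
  ∀ E' : {E : Set X // E ∈ DSsets S'},
    (∃ (n : ℕ) (Es : Fin n → {E : Set Y // E ∈ DSsets S}),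
      (Pairwise fun i j => Disjoint (Es i).1 (Es j).1) ∧ (⋃ i, (Es i).1) = π ⁻¹' E'.1) ∧
    ∀ (n : ℕ) (Es : Fin n → {E : Set Y // E ∈ DSsets S}),
      (Pairwise fun i j => Disjoint (Es i).1 (Es j).1) → (⋃ i, (Es i).1) = π ⁻¹' E'.1 →
      g (mkDs S' E') = ∑ i, mkDs S (Es i)

/-- `g` is the contravariant map on `D^u` induced by (an `s`-bijective) `π`. -/
def ContraUProp (S : SmaleSpace Y) (S' : SmaleSpace X) (π : Y → X) (g : Du S' →+ Du S) : Prop :=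
  ∀ E' : {E : Set X // E ∈ DUsets S'},
    (∃ (n : ℕ) (Es : Fin n → {E : Set Y // E ∈ DUsets S}),
      (Pairwise fun i j => Disjoint (Es i).1 (Es j).1) ∧ (⋃ i, (Es i).1) = π ⁻¹' E'.1) ∧
    ∀ (n : ℕ) (Es : Fin n → {E : Set Y // E ∈ DUsets S}),
      (Pairwise fun i j => Disjoint (Es i).1 (Es j).1) → (⋃ i, (Es i).1) = π ⁻¹' E'.1 →
      g (mkDu S' E') = ∑ i, mkDu S (Es i)

open Classical in
/-- The map `π^s : D^s(Σ) → D^s(Σ')` induced by an `s`-bijective factor map. -/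
noncomputable def inducedS (S : SmaleSpace Y) (S' : SmaleSpace X) (π : Y → X) : Ds S →+ Ds S' :=
  if h : ∃ f, CovSProp S S' π f then h.choose else 0

open Classical in
/-- The map `π^{s*} : D^s(Σ') → D^s(Σ)` induced by a `u`-bijective factor map. -/
noncomputable def inducedSstar (S : SmaleSpace Y) (S' : SmaleSpace X) (π : Y → X) :
    Ds S' →+ Ds S :=
  if h : ∃ g, ContraSProp S S' π g then h.choose else 0

end Induced

section Pairs

variable {X : Type} [MetricSpace X]

/-- An `s/u`-bijective pair for a Smale space. -/
structure SUPair (T : SmaleSpace X) : Type 1 where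
  Y : Type
  Z : Type
  [mY : MetricSpace Y]
  [mZ : MetricSpace Z]
  SY : SmaleSpace Y
  SZ : SmaleSpace Z
  ps : Y → X
  pu : Z → X
  ps_sbij : IsSBij SY.phi T.phi ps
  pu_ubij : IsUBij SZ.phi T.phi pu
  Yu_td : ∀ y ε, 0 < ε → ε ≤ SY.eps → IsTotallyDisconnected (SY.locUnstable y ε)
  Zs_td : ∀ z ε, 0 < ε → ε ≤ SZ.eps → IsTotallyDisconnected (SZ.locStable z ε)

attribute [instance] SUPair.mY SUPair.mZ

variable {T : SmaleSpace X}

/-- The fibred product `Σ_{L,M}(π)` of `L+1` copies of `Y` and `M+1` copies of `Z` over `X`. -/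
abbrev SigmaLM (P : SUPair T) (L M : ℕ) : Type :=
  {p : (Fin (L + 1) → P.Y) × (Fin (M + 1) → P.Z) // ∀ i j, P.ps (p.1 i) = P.pu (p.2 j)}

/-- The dynamics `σ_{L,M}` on the fibred product. -/
def sigmaLM (P : SUPair T) (L M : ℕ) : SigmaLM P L M ≃ₜ SigmaLM P L M where
  toFun p := ⟨(fun i => P.SY.phi (p.1.1 i), fun j => P.SZ.phi (p.1.2 j)), by
    intro i j
    dsimp only
    rw [P.ps_sbij.toIsFactorMap.semiconj, P.pu_ubij.toIsFactorMap.semiconj, p.2 i j]⟩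
  invFun p := ⟨(fun i => P.SY.phi.symm (p.1.1 i), fun j => P.SZ.phi.symm (p.1.2 j)), by
    intro i j
    dsimp only
    have hs : ∀ y, P.ps (P.SY.phi.symm y) = T.phi.symm (P.ps y) := by
      intro y
      have h := P.ps_sbij.toIsFactorMap.semiconj (P.SY.phi.symm y)
      rw [P.SY.phi.apply_symm_apply] at h
      rw [h, T.phi.symm_apply_apply]
    have hu : ∀ z, P.pu (P.SZ.phi.symm z) = T.phi.symm (P.pu z) := by
      intro z
      have h := P.pu_ubij.toIsFactorMap.semiconj (P.SZ.phi.symm z)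
      rw [P.SZ.phi.apply_symm_apply] at h
      rw [h, T.phi.symm_apply_apply]
    rw [hs, hu, p.2 i j]⟩
  left_inv p := Subtype.ext (Prod.ext (funext fun i => P.SY.phi.symm_apply_apply _)
    (funext fun j => P.SZ.phi.symm_apply_apply _))
  right_inv p := Subtype.ext (Prod.ext (funext fun i => P.SY.phi.apply_symm_apply _)
    (funext fun j => P.SZ.phi.apply_symm_apply _))
  continuous_toFun := by
    apply Continuous.subtype_mk
    exact Continuous.prodMk
      (continuous_pi fun i => P.SY.phi.continuous.comp
        ((continuous_apply i).comp (continuous_fst.comp continuous_subtype_val)))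
      (continuous_pi fun j => P.SZ.phi.continuous.comp
        ((continuous_apply j).comp (continuous_snd.comp continuous_subtype_val)))
  continuous_invFun := by
    apply Continuous.subtype_mk
    exact Continuous.prodMk
      (continuous_pi fun i => P.SY.phi.symm.continuous.comp
        ((continuous_apply i).comp (continuous_fst.comp continuous_subtype_val)))
      (continuous_pi fun j => P.SZ.phi.symm.continuous.comp
        ((continuous_apply j).comp (continuous_snd.comp continuous_subtype_val)))

/-- The map `δ_{l,}` deleting the `y`-entry at position `l`. -/
def delY (P : SUPair T) {L M : ℕ} (l : Fin (L + 2)) : SigmaLM P (L + 1) M → SigmaLM P L M :=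
  fun p => ⟨(fun i => p.1.1 (l.succAbove i), p.1.2), fun i j => p.2 (l.succAbove i) j⟩

/-- The map `δ_{,m}` deleting the `z`-entry at position `m`. -/
def delZ (P : SUPair T) {L M : ℕ} (m : Fin (M + 2)) : SigmaLM P L (M + 1) → SigmaLM P L M :=
  fun p => ⟨(p.1.1, fun j => p.1.2 (m.succAbove j)), fun i j => p.2 i (m.succAbove j)⟩

/-- An `s/u`-bijective pair together with chosen Smale space structures on the fibred
products, compatible with the dynamics `σ_{L,M}` (such structures exist since the
`Σ_{L,M}(π)` are shifts of finite type). -/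
structure SUPairData (T : SmaleSpace X) extends SUPair T where
  SS : ∀ L M : ℕ, SmaleSpace (SigmaLM toSUPair L M)
  SS_phi : ∀ L M : ℕ, (SS L M).phi = sigmaLM toSUPair L M

/-- Index set for the degree-`N` part of the double complex: pairs `(L, M)` with `L - M = N`. -/
abbrev HIdx (N : ℤ) : Type := {q : ℕ × ℕ // (q.1 : ℤ) - (q.2 : ℤ) = N}

/-- The degree-`N` group `C^s_N(π) = ⊕_{L-M=N} D^s(Σ_{L,M}(π))` of the double complex. -/
abbrev CNgrp (P : SUPairData T) (N : ℤ) : Type :=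
  DirectSum (HIdx N) (fun q => Ds (P.SS q.1.1 q.1.2))

open Classical in
/-- The component of the boundary map on the `(L,M)`-summand. -/
noncomputable def bdryAt (P : SUPairData T) (N M' : ℤ) (q : HIdx N) :
    Ds (P.SS q.1.1 q.1.2) →+ CNgrp P M' :=
  (match q with
    | ⟨(0, _), _⟩ => 0
    | ⟨(L + 1, M), _⟩ =>
      if hN : (L : ℤ) - (M : ℤ) = M' then
        ∑ l : Fin (L + 2), ((-1 : ℤ) ^ (l : ℕ)) •
          ((DirectSum.of (fun r : HIdx M' => Ds (P.SS r.1.1 r.1.2)) ⟨(L, M), hN⟩).comp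
            (inducedS (P.SS (L + 1) M) (P.SS L M) (delY P.toSUPair l)))
      else 0) +
  (if hN : (q.1.1 : ℤ) - ((q.1.2 + 1 : ℕ) : ℤ) = M' then
    ∑ m : Fin (q.1.2 + 2), ((-1 : ℤ) ^ ((m : ℕ) + q.1.1)) •
      ((DirectSum.of (fun r : HIdx M' => Ds (P.SS r.1.1 r.1.2)) ⟨(q.1.1, q.1.2 + 1), hN⟩).comp
        (inducedSstar (P.SS q.1.1 (q.1.2 + 1)) (P.SS q.1.1 q.1.2) (delZ P.toSUPair m)))
  else 0)

open Classical in
/-- The boundary map `∂^s_N(π) : C^s_N(π) → C^s_{N-1}(π)` (realised as a map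
`C^s_N(π) → C^s_{M'}(π)`, which is the boundary when `M' = N - 1`). -/
noncomputable def bdry (P : SUPairData T) (N M' : ℤ) : CNgrp P N →+ CNgrp P M' :=
  DirectSum.toAddMonoid fun q => bdryAt P N M' q

/-- The kernel of the boundary at level `N`. -/
noncomputable def Hker (P : SUPairData T) (N : ℤ) : AddSubgroup (CNgrp P N) :=
  (bdry P N (N - 1)).ker

/-- The image of the boundary from level `N+1`. -/
noncomputable def Him (P : SUPairData T) (N : ℤ) : AddSubgroup (CNgrp P N) :=
  (bdry P (N + 1) N).range

/-- The homology `H^s_N` of the double complex of the `s/u`-bijective pair. -/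
abbrev Hsgrp (P : SUPairData T) (N : ℤ) : Type :=
  Hker P N ⧸ (Him P N).addSubgroupOf (Hker P N)

end Pairs

/-! Both halves reduce to a uniform bound on the fibres of a factor map `π : Y → X` that is
injective on stable classes; the `z`-half is the same statement after reversing time, which
turns `π_u` into such a map. Two close points `y, y'` of one fibre satisfy `y' ∈ Yᵘ(y)`: the
bracket `[y', y]` is stably equivalent to `y'`, and its image shadows `π y' = π y` both forwards
and backwards, so by expansiveness of `X` and injectivity on stable classes it equals `y'`.
Since `ψ⁻¹` contracts local unstable sets, two distinct points of a fibre are eventually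
`ε`-separated under `ψ`. At a common time, `n` points of a fibre are then pairwise
`ε`-separated, so `n` is at most the size of a finite `ε/2`-net of the compact space `Y`. -/

theorem exists_card_le_of_pairwise_lt_dist {Y : Type} [MetricSpace Y] [CompactSpace Y]
    {ε : ℝ} (hε : 0 < ε) :
    ∃ K : ℕ, ∀ (n : ℕ) (f : Fin n → Y), Pairwise (fun i j => ε < dist (f i) (f j)) → n ≤ K := by
  obtain ⟨t, -, hcover⟩ :=
    isCompact_univ.elim_nhds_subcover (fun y : Y => Metric.ball y (ε / 2))
      fun y _ => Metric.ball_mem_nhds y (half_pos hε)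
  refine ⟨t.card, fun n f hf => ?_⟩
  have hnear : ∀ i, ∃ c ∈ t, dist (f i) c < ε / 2 := fun i => by
    simpa using hcover (mem_univ (f i))
  choose c hct hc using hnear
  have hinj : InjOn c (Finset.univ : Finset (Fin n)) := fun i _ j _ hij => by
    by_contra hne
    have hlt : dist (f i) (f j) < ε := calc
      dist (f i) (f j) ≤ dist (f i) (c i) + dist (f j) (c i) := dist_triangle_right _ _ _
      _ < ε / 2 + ε / 2 := add_lt_add (hc i) (by rw [hij]; exact hc j)
      _ = ε := add_halves ε
    exact (hf hne).not_gt hlt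
  simpa using Finset.card_le_card_of_injOn c (fun i _ => hct i) hinj

namespace SmaleSpace

variable {W : Type} [MetricSpace W] (S : SmaleSpace W)

/-- The time reversal of `S`; stable and unstable sets are exchanged. -/
def op : SmaleSpace W where
  compact := S.compact
  phi := S.phi.symm
  eps := S.eps
  eps_pos := S.eps_pos
  lam := S.lam
  lam_pos := S.lam_pos
  lam_lt_one := S.lam_lt_one
  bracket x y := S.bracket y x
  bracket_cont :=
    S.bracket_cont.comp continuous_swap.continuousOn fun p hp => by
      simpa [dist_comm] using hp
  bracket_self x := S.bracket_self x
  bracket_eq₁ x y z h₁ h₂ h₃ :=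
    S.bracket_eq₂ z y x (by rwa [dist_comm]) (by rwa [dist_comm]) (by rwa [dist_comm])
  bracket_eq₂ x y z h₁ h₂ h₃ :=
    S.bracket_eq₁ z y x (by rwa [dist_comm]) (by rwa [dist_comm]) (by rwa [dist_comm])
  bracket_phi x y h₁ h₂ := by
    have h := S.bracket_phi (S.phi.symm y) (S.phi.symm x) (by rwa [dist_comm])
      (by rwa [S.phi.apply_symm_apply, S.phi.apply_symm_apply, dist_comm])
    rw [S.phi.apply_symm_apply, S.phi.apply_symm_apply] at h
    rw [← h, S.phi.symm_apply_apply]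
  contract_s := S.contract_u
  contract_u x y z h₁ h₂ h₃ h₄ := by
    simpa using S.contract_s x y z h₁ h₂ h₃ h₄

lemma lam_pow_mul_le {a : ℝ} (ha : 0 ≤ a) (n : ℕ) : S.lam ^ n * a ≤ a :=
  mul_le_of_le_one_left ha (pow_le_one₀ S.lam_pos.le S.lam_lt_one.le)

lemma tendsto_lam_pow_mul (a : ℝ) : Tendsto (fun n : ℕ => S.lam ^ n * a) atTop (𝓝 0) := by
  simpa using (tendsto_pow_atTop_nhds_zero_of_lt_one S.lam_pos.le S.lam_lt_one).mul_const a

lemma phi_mem_locStable {x z : W} {a : ℝ} (ha : a ≤ S.eps) (hz : z ∈ S.locStable x a) :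
    S.phi z ∈ S.locStable (S.phi x) (S.lam * a) := by
  have hxz : dist x z ≤ S.eps := hz.1.trans ha
  have hd : dist (S.phi x) (S.phi z) ≤ S.lam * a :=
    (S.contract_s x x z (by simp [S.eps_pos.le]) (S.bracket_self x) hxz hz.2).trans
      (mul_le_mul_of_nonneg_left hz.1 S.lam_pos.le)
  have hdeps : dist (S.phi x) (S.phi z) ≤ S.eps :=
    hd.trans ((mul_le_of_le_one_left (dist_nonneg.trans hz.1) S.lam_lt_one.le).trans ha)
  exact ⟨hd, by rw [← S.bracket_phi x z hxz hdeps, hz.2]⟩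

lemma iterate_mem_locStable {x z : W} {a : ℝ} (ha : a ≤ S.eps) (hz : z ∈ S.locStable x a)
    (n : ℕ) : (⇑S.phi)^[n] z ∈ S.locStable ((⇑S.phi)^[n] x) (S.lam ^ n * a) := by
  induction n with
  | zero => simpa using hz
  | succ n ih =>
    rw [Function.iterate_succ_apply', Function.iterate_succ_apply', pow_succ', mul_assoc]
    exact S.phi_mem_locStable ((S.lam_pow_mul_le (dist_nonneg.trans hz.1) n).trans ha) ih

/-- Closeness of the forward orbits propagates `[w, z] = w` along them, and `φ⁻¹` contracts
local unstable sets, so every `dist (φᵐ w) (φᵐ z)` is at most `λᵏ * eps` for all `k`. -/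
lemma eq_of_bracket_eq_of_forall_dist_iterate_le {w z : W} (hw : S.bracket w z = w)
    (hd : ∀ n, dist ((⇑S.phi)^[n] w) ((⇑S.phi)^[n] z) ≤ S.eps) : w = z := by
  have hbr : ∀ n, S.bracket ((⇑S.phi)^[n] w) ((⇑S.phi)^[n] z) = (⇑S.phi)^[n] w := by
    intro n
    induction n with
    | zero => exact hw
    | succ n ih =>
      have h := hd (n + 1)
      rw [Function.iterate_succ_apply', Function.iterate_succ_apply'] at h ⊢
      rw [← S.bracket_phi _ _ (hd n) h, ih]
  have hcontract : ∀ m, dist ((⇑S.phi)^[m] w) ((⇑S.phi)^[m] z) ≤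
      S.lam * dist ((⇑S.phi)^[m + 1] w) ((⇑S.phi)^[m + 1] z) := fun m => by
    simpa [Function.iterate_succ_apply'] using
      S.contract_u ((⇑S.phi)^[m + 1] z) ((⇑S.phi)^[m + 1] w) ((⇑S.phi)^[m + 1] z)
        (by rw [dist_comm]; exact hd _) (hbr _) (by simp [S.eps_pos.le]) (S.bracket_self _)
  have hbound : ∀ k m, dist ((⇑S.phi)^[m] w) ((⇑S.phi)^[m] z) ≤ S.lam ^ k * S.eps := by
    intro k
    induction k with
    | zero => simpa using hd
    | succ k ih =>
      intro m
      calc dist ((⇑S.phi)^[m] w) ((⇑S.phi)^[m] z)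
          ≤ S.lam * dist ((⇑S.phi)^[m + 1] w) ((⇑S.phi)^[m + 1] z) := hcontract m
        _ ≤ S.lam * (S.lam ^ k * S.eps) := mul_le_mul_of_nonneg_left (ih _) S.lam_pos.le
        _ = S.lam ^ (k + 1) * S.eps := by ring
  exact dist_le_zero.mp (ge_of_tendsto' (S.tendsto_lam_pow_mul _) fun k => hbound k 0)

lemma eq_of_bracket_eq_of_forall_dist_symm_iterate_le {w z : W} (hw : S.bracket z w = w)
    (hd : ∀ n, dist ((⇑S.phi.symm)^[n] w) ((⇑S.phi.symm)^[n] z) ≤ S.eps) : w = z :=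
  S.op.eq_of_bracket_eq_of_forall_dist_iterate_le hw hd

lemma exists_dist_bracket_le {δ : ℝ} (hδ : 0 < δ) :
    ∃ γ > 0, ∀ a b : W, dist a b ≤ γ → dist a (S.bracket a b) ≤ δ := by
  have := S.compact
  have hD : IsCompact {p : W × W | dist p.1 p.2 ≤ S.eps} :=
    (isClosed_le (continuous_fst.dist continuous_snd) continuous_const).isCompact
  obtain ⟨η, hη, hmod⟩ :=
    Metric.uniformContinuousOn_iff.mp (hD.uniformContinuousOn_of_continuous S.bracket_cont) δ hδ
  refine ⟨min (η / 2) S.eps, lt_min (half_pos hη) S.eps_pos, fun a b hab => ?_⟩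
  have hclose : dist (a, b) (a, a) < η := by
    rw [Prod.dist_eq, dist_self, max_eq_right dist_nonneg, dist_comm]
    linarith [min_le_left (η / 2) S.eps]
  have h := hmod (a, b) (hab.trans (min_le_right _ _)) (a, a) (by simp [S.eps_pos.le]) hclose
  rw [dist_comm]
  simpa [S.bracket_self] using h.le

/-- Expansiveness: for close `x, z` the bracket `[x, z]` lies in `Xˢ(x) ∩ Xᵘ(z)`; shadowing
forwards makes it `z`, and then shadowing backwards makes `z = x`. -/
lemma exists_expansive_const : ∃ ε > 0, ∀ x z : W,
    (∀ n, dist ((⇑S.phi)^[n] x) ((⇑S.phi)^[n] z) ≤ ε) →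
    (∀ n, dist ((⇑S.phi.symm)^[n] x) ((⇑S.phi.symm)^[n] z) ≤ ε) → x = z := by
  have heps2 : S.eps / 2 ≤ S.eps := half_le_self S.eps_pos.le
  obtain ⟨γ, hγ, hbr⟩ := S.exists_dist_bracket_le (half_pos S.eps_pos)
  refine ⟨min γ (S.eps / 2), lt_min hγ (half_pos S.eps_pos), fun x z hf hb => ?_⟩
  have hle : min γ (S.eps / 2) ≤ S.eps / 2 := min_le_right _ _
  have hxz : dist x z ≤ min γ (S.eps / 2) := by simpa using hf 0
  have hxz' : dist x z ≤ S.eps := hxz.trans (hle.trans heps2)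
  have hw : S.bracket x z ∈ S.locStable x (S.eps / 2) :=
    ⟨hbr x z (hxz.trans (min_le_left _ _)),
      S.bracket_eq₁ x x z (by simp [S.eps_pos.le]) hxz' hxz'⟩
  have hwz : S.bracket x z = z := by
    refine S.eq_of_bracket_eq_of_forall_dist_iterate_le
      (S.bracket_eq₂ x z z hxz' (by simp [S.eps_pos.le]) hxz') fun n => ?_
    calc dist ((⇑S.phi)^[n] (S.bracket x z)) ((⇑S.phi)^[n] z)
        ≤ dist ((⇑S.phi)^[n] x) ((⇑S.phi)^[n] (S.bracket x z)) +
          dist ((⇑S.phi)^[n] x) ((⇑S.phi)^[n] z) := dist_triangle_left _ _ _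
      _ ≤ S.eps / 2 + S.eps / 2 :=
        add_le_add ((S.iterate_mem_locStable heps2 hw n).1.trans
          (S.lam_pow_mul_le (half_pos S.eps_pos).le n)) ((hf n).trans hle)
      _ = S.eps := add_halves _
  refine (S.eq_of_bracket_eq_of_forall_dist_symm_iterate_le hwz fun n => ?_).symm
  rw [dist_comm]
  exact (hb n).trans (hle.trans heps2)

end SmaleSpace

section Fibres

variable {Y X : Type} [MetricSpace Y] [MetricSpace X]

theorem exists_bracket_eq_of_map_eq_of_dist_le (S : SmaleSpace Y) (T : SmaleSpace X)
    {π : Y → X} (hπ : Continuous π) (hsemi : Function.Semiconj π S.phi T.phi)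
    (hinj : ∀ y, InjOn π {y' | StableEquiv S.phi y y'}) :
    ∃ ε > 0, ε ≤ S.eps ∧ ∀ y y', π y = π y' → dist y y' ≤ ε → S.bracket y' y = y' := by
  have := S.compact
  obtain ⟨ε₀, hε₀, hexp⟩ := T.exists_expansive_const
  obtain ⟨δ, hδ, hπδ⟩ :=
    Metric.uniformContinuous_iff.mp (CompactSpace.uniformContinuous_of_continuous hπ) ε₀ hε₀
  set ρ := min δ S.eps / 3 with hρ_def
  have hρ : 0 < ρ := div_pos (lt_min hδ S.eps_pos) three_pos
  have hρδ : 2 * ρ < δ := by linarith [min_le_left δ S.eps]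
  have hρeps : 2 * ρ ≤ S.eps := by linarith [min_le_right δ S.eps]
  obtain ⟨γ, hγ, hbr⟩ := S.exists_dist_bracket_le hρ
  refine ⟨min γ ρ, lt_min hγ hρ, by linarith [min_le_right γ ρ], fun y y' hfib hyy' => ?_⟩
  have hyy'ρ : dist y y' ≤ ρ := hyy'.trans (min_le_right _ _)
  have hyy'eps : dist y' y ≤ S.eps := by rw [dist_comm]; linarith
  have hs : S.bracket y' y ∈ S.locStable y' ρ :=
    ⟨hbr y' y (by rw [dist_comm]; exact hyy'.trans (min_le_left _ _)),
      S.bracket_eq₁ y' y' y (by simp [S.eps_pos.le]) hyy'eps hyy'eps⟩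
  have hu : S.bracket y' y ∈ S.op.locStable y (2 * ρ) :=
    ⟨by linarith [dist_triangle y y' (S.bracket y' y), hs.1],
      S.bracket_eq₂ y' y y hyy'eps (by simp [S.eps_pos.le]) hyy'eps⟩
  have hsemi' : Function.Semiconj π S.phi.symm T.phi.symm :=
    hsemi.inverses_right S.phi.apply_symm_apply T.phi.symm_apply_apply
  have hexp_eq : π y' = π (S.bracket y' y) := by
    refine hexp _ _ (fun n => ?_) (fun n => ?_)
    · rw [← hsemi.iterate_right n, ← hsemi.iterate_right n]
      refine (hπδ ((S.iterate_mem_locStable (by linarith) hs n).1.trans_lt ?_)).le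
      linarith [S.lam_pow_mul_le hρ.le n]
    · rw [← hfib, ← hsemi'.iterate_right n, ← hsemi'.iterate_right n]
      refine (hπδ ((S.op.iterate_mem_locStable hρeps hu n).1.trans_lt ?_)).le
      linarith [S.op.lam_pow_mul_le (by linarith : (0 : ℝ) ≤ 2 * ρ) n]
  have hstable : StableEquiv S.phi y' (S.bracket y' y) :=
    squeeze_zero (fun _ => dist_nonneg) (fun n => (S.iterate_mem_locStable (by linarith) hs n).1)
      (S.tendsto_lam_pow_mul ρ)
  exact hinj y' hstable (by simp [StableEquiv]) hexp_eq.symm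

theorem dist_le_lam_pow_mul_of_map_eq (S : SmaleSpace Y) (T : SmaleSpace X) {π : Y → X}
    (hsemi : Function.Semiconj π S.phi T.phi) {ε : ℝ} (hε : ε ≤ S.eps)
    (hunst : ∀ y y', π y = π y' → dist y y' ≤ ε → S.bracket y' y = y') {y y' : Y}
    (hfib : π y = π y') {k : ℕ} (hk : dist ((⇑S.phi)^[k] y) ((⇑S.phi)^[k] y') ≤ ε) :
    dist y y' ≤ S.lam ^ k * ε := by
  have hfibk : π ((⇑S.phi)^[k] y) = π ((⇑S.phi)^[k] y') := by
    rw [hsemi.iterate_right k, hsemi.iterate_right k, hfib]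
  have h : dist ((⇑S.phi.symm)^[k] ((⇑S.phi)^[k] y)) ((⇑S.phi.symm)^[k] ((⇑S.phi)^[k] y')) ≤
      S.lam ^ k * ε := (S.op.iterate_mem_locStable hε ⟨hk, hunst _ _ hfibk hk⟩ k).1
  have hback : Function.LeftInverse (⇑S.phi.symm)^[k] (⇑S.phi)^[k] :=
    Function.LeftInverse.iterate S.phi.symm_apply_apply k
  rwa [hback, hback] at h

theorem eventually_lt_dist_iterate_of_map_eq (S : SmaleSpace Y) (T : SmaleSpace X)
    {π : Y → X} (hsemi : Function.Semiconj π S.phi T.phi) {ε : ℝ} (hε : ε ≤ S.eps)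
    (hunst : ∀ y y', π y = π y' → dist y y' ≤ ε → S.bracket y' y = y') {y y' : Y}
    (hfib : π y = π y') (hne : y ≠ y') :
    ∀ᶠ k in atTop, ε < dist ((⇑S.phi)^[k] y) ((⇑S.phi)^[k] y') := by
  by_contra hfreq
  simp only [not_eventually, not_lt] at hfreq
  obtain ⟨k, hsmall, hk⟩ :=
    (((S.tendsto_lam_pow_mul ε).eventually (gt_mem_nhds (dist_pos.mpr hne))).and_frequently
      hfreq).exists
  exact (dist_le_lam_pow_mul_of_map_eq S T hsemi hε hunst hfib hk).not_gt hsmall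

theorem exists_card_le_of_forall_map_eq (S : SmaleSpace Y) (T : SmaleSpace X) {π : Y → X}
    (hπ : Continuous π) (hsemi : Function.Semiconj π S.phi T.phi)
    (hinj : ∀ y, InjOn π {y' | StableEquiv S.phi y y'}) :
    ∃ K : ℕ, ∀ (n : ℕ) (f : Fin n → Y), Function.Injective f →
      (∀ i j, π (f i) = π (f j)) → n ≤ K := by
  have := S.compact
  obtain ⟨ε, hε, hεeps, hunst⟩ := exists_bracket_eq_of_map_eq_of_dist_le S T hπ hsemi hinj
  obtain ⟨K, hK⟩ := exists_card_le_of_pairwise_lt_dist (Y := Y) hε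
  refine ⟨K, fun n f hf hfib => ?_⟩
  have hsep : ∀ᶠ k in atTop,
      Pairwise fun i j => ε < dist ((⇑S.phi)^[k] (f i)) ((⇑S.phi)^[k] (f j)) := by
    simp only [Pairwise, eventually_all]
    exact fun i j hij =>
      eventually_lt_dist_iterate_of_map_eq S T hsemi hεeps hunst (hfib i j) (hf.ne hij)
  obtain ⟨k, hk⟩ := hsep.exists
  exact hK n _ hk

end Fibres

/-- For an `s/u`-bijective pair `π` for `(X, φ)` there is `N₀` such that for
all `L, M`, every element of `Σ_{L,M}(π)` has two equal `y`-coordinates as soon as `L > N₀`,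
and two equal `z`-coordinates as soon as `M > N₀`. -/
theorem repeated_entries_in_fibred_products {X : Type} [MetricSpace X] {T : SmaleSpace X}
    (P : SUPair T) :
    ∃ N₀ : ℕ, ∀ (L M : ℕ) (p : SigmaLM P L M),
      (N₀ < L → ∃ i j : Fin (L + 1), i ≠ j ∧ p.1.1 i = p.1.1 j) ∧
      (N₀ < M → ∃ i j : Fin (M + 1), i ≠ j ∧ p.1.2 i = p.1.2 j) := by
  obtain ⟨Ks, hKs⟩ := exists_card_le_of_forall_map_eq P.SY T P.ps_sbij.continuous
    P.ps_sbij.semiconj fun y => (P.ps_sbij.bij y).injOn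
  obtain ⟨Ku, hKu⟩ := exists_card_le_of_forall_map_eq P.SZ.op T.op P.pu_ubij.continuous
    (Function.Semiconj.inverses_right P.pu_ubij.semiconj P.SZ.phi.apply_symm_apply
      T.phi.symm_apply_apply) fun z => (P.pu_ubij.bij z).injOn
  refine ⟨max Ks Ku, fun L M p => ⟨fun hL => ?_, fun hM => ?_⟩⟩
  · obtain ⟨i, j, heq, hne⟩ := Function.not_injective_iff.mp fun hinj =>
      (hKs _ _ hinj fun i j => (p.2 i 0).trans (p.2 j 0).symm).not_gt (by omega)
    exact ⟨i, j, hne, heq⟩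
  · obtain ⟨i, j, heq, hne⟩ := Function.not_injective_iff.mp fun hinj =>
      (hKu _ _ hinj fun i j => (p.2 0 i).symm.trans (p.2 0 j)).not_gt (by omega)
    exact ⟨i, j, hne, heq⟩
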